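/- Suppose K is self-adjoint and w* = (u₀*, p*) ∈ W is a saddle point, i.e., φ(u₀) − φ(u₀*) + ⟨w − w*, F(w*)⟩ ≥ 0 for all w ∈ W. If w̃^k = (ũ₀^k, p̃^k) ∈ W satisfies the prediction variational inequality φ(u₀) − φ(ũ₀^k) + ⟨w − w̃^k, F(w̃^k) + G(w̃^k − w^k)⟩ ≥ 0 for all w = (u₀, p) ∈ W, and w^{k+1} = w^k − D(w^k − w̃^k), then ‖w^{k+1} − w*‖²_K ≤ ‖w^k − w*‖²_K − ‖w^k − w̃^k‖²_N − 2‖p̃^k − p*‖² − 2τ‖ũ₀^k − u₀*‖². -/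

import Mathlib

open scoped InnerProductSpace RealInnerProductSpace

noncomputable section

/-- The product space `W = H × H` equipped with the Hilbert space structure
`⟨(u,p),(u',p')⟩ = ⟨u,u'⟩ + ⟨p,p'⟩`. -/
abbrev W (H : Type*) [NormedAddCommGroup H] [InnerProductSpace ℝ H] := WithLp 2 (H × H)

/-- The canonical (linear homeomorphism) identification of `W` with the plain product. -/
def eW (H : Type*) [NormedAddCommGroup H] [InnerProductSpace ℝ H] :
    W H ≃L[ℝ] H × H := WithLp.prodContinuousLinearEquiv 2 ℝ H H

variable {H : Type*} [NormedAddCommGroup H] [InnerProductSpace ℝ H] [CompleteSpace H]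

/-- The block diagonal operator `D(u,p) = (ρu, σp)` on `W`. -/
def opD (H : Type*) [NormedAddCommGroup H] [InnerProductSpace ℝ H] (ρ σ : ℝ) :
    W H →L[ℝ] W H :=
  ((eW H).symm.toContinuousLinearMap.comp
    ((ρ • ContinuousLinearMap.fst ℝ H H).prod (σ • ContinuousLinearMap.snd ℝ H H))).comp
    (eW H).toContinuousLinearMap

/-- The block operator `G(u,p) = ((1/r)u − ℒ*p, −θℒu + (1/s)p)` on `W`. -/
def opG (L : H →L[ℝ] H) (r s θ : ℝ) : W H →L[ℝ] W H :=
  ((eW H).symm.toContinuousLinearMap.comp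
    (((1 / r) • ContinuousLinearMap.fst ℝ H H
        - (ContinuousLinearMap.adjoint L).comp (ContinuousLinearMap.snd ℝ H H)).prod
      ((-θ) • (L.comp (ContinuousLinearMap.fst ℝ H H))
        + (1 / s) • ContinuousLinearMap.snd ℝ H H))).comp
    (eW H).toContinuousLinearMap

/-- The operator `K = G ∘ D⁻¹`. -/
def opK (L : H →L[ℝ] H) (r s θ ρ σ : ℝ) : W H →L[ℝ] W H :=
  (opG L r s θ).comp (opD H ρ⁻¹ σ⁻¹)

/-- The operator `N = G + G* − D* ∘ K ∘ D`. -/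
def opN (L : H →L[ℝ] H) (r s θ ρ σ : ℝ) : W H →L[ℝ] W H :=
  opG L r s θ + ContinuousLinearMap.adjoint (opG L r s θ)
    - ((ContinuousLinearMap.adjoint (opD H ρ σ)).comp
        ((opK L r s θ ρ σ).comp (opD H ρ σ)))

/-- The map `F(u₀, p) = (τu₀ + ℒ*p, p − ℒu₀ + u_T)` on `W`. -/
def Fmap (L : H →L[ℝ] H) (uT : H) (τ : ℝ) : W H → W H := fun w =>
  (eW H).symm (τ • ((eW H) w).1 + ContinuousLinearMap.adjoint L ((eW H) w).2,
               ((eW H) w).2 - L ((eW H) w).1 + uT)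

/-- `‖w‖²_A = ⟨Aw, w⟩` for an operator `A` on `W`. -/
def normSq (A : W H →L[ℝ] W H) (w : W H) : ℝ := ⟪A w, w⟫_ℝ

/-- A saddle point `w* = (u₀*, p*)`: `φ(u₀) − φ(u₀*) + ⟨w − w*, F(w*)⟩ ≥ 0` for all `w`. -/
def IsSaddle (L : H →L[ℝ] H) (uT : H) (τ : ℝ) (φ : H → ℝ) (wstar : W H) : Prop :=
  ∀ w : W H, φ ((eW H w).1) - φ ((eW H wstar).1)
      + ⟪w - wstar, Fmap L uT τ wstar⟫_ℝ ≥ 0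

/-- The prediction variational inequality satisfied by `w̃` given `wᵏ`:
`φ(u₀) − φ(ũ₀) + ⟨w − w̃, F(w̃) + G(w̃ − wᵏ)⟩ ≥ 0` for all `w`. -/
def PredVI (L : H →L[ℝ] H) (uT : H) (τ : ℝ) (φ : H → ℝ) (r s θ : ℝ)
    (wk wt : W H) : Prop :=
  ∀ w : W H, φ ((eW H w).1) - φ ((eW H wt).1)
      + ⟪w - wt, Fmap L uT τ wt + opG L r s θ (wt - wk)⟫_ℝ ≥ 0

end

/-! Testing the saddle-point inequality at `w̃` and the prediction inequality at `w*` and adding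
them, the `φ`-terms cancel and `⟨G(wᵏ − w̃), w̃ − w*⟩ ≥ ⟨w̃ − w*, F w̃ − F w*⟩`. The coupling
terms of `F` are skew (`ℒ*` against `−ℒ`), so the right side is `τ‖ũ₀ − u₀*‖² + ‖p̃ − p*‖²`.
Since `K D = G` and `K` is symmetric, expanding the square gives
`‖a − D e‖²_K = ‖a‖²_K − ‖e‖²_N − 2⟨G e, a − e⟩`; with `a = wᵏ − w*`, `e = wᵏ − w̃` (so that
`a − D e = wᵏ⁺¹ − w*` and `a − e = w̃ − w*`) the estimate follows. -/

open ContinuousLinearMap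

theorem inner_map_sub_apply_of_comp_eq {E : Type*} [NormedAddCommGroup E]
    [InnerProductSpace ℝ E] [CompleteSpace E] {K G D : E →L[ℝ] E} (hKD : K ∘L D = G)
    (hK : IsSelfAdjoint K) (a e : E) :
    ⟪K (a - D e), a - D e⟫_ℝ
      = ⟪K a, a⟫_ℝ - ⟪(G + adjoint G - adjoint D ∘L (K ∘L D)) e, e⟫_ℝ - 2 * ⟪G e, a - e⟫_ℝ := by
  have hKDe : K (D e) = G e := by rw [← hKD, comp_apply]
  have hKa : ⟪K a, D e⟫_ℝ = ⟪a, G e⟫_ℝ := hKDe ▸ hK.isSymmetric a (D e)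
  simp only [map_sub, sub_apply, add_apply, comp_apply, hKDe, inner_sub_left, inner_sub_right,
    inner_add_left, adjoint_inner_left, hKa]
  rw [real_inner_comm a (G e), real_inner_comm e (G e)]
  ring

section Operators

variable {H : Type*} [NormedAddCommGroup H] [InnerProductSpace ℝ H]

theorem opD_comp_opD (a b c d : ℝ) : opD H a b ∘L opD H c d = opD H (a * c) (b * d) := by
  ext w
  simp [opD, eW, mul_smul]

theorem opD_one_one : opD H 1 1 = ContinuousLinearMap.id ℝ (W H) := by
  ext w
  simp [opD, eW]

theorem inner_eq_eW (v v' : W H) :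
    ⟪v, v'⟫_ℝ = ⟪(eW H v).1, (eW H v').1⟫_ℝ + ⟪(eW H v).2, (eW H v').2⟫_ℝ :=
  rfl

variable [CompleteSpace H]

theorem opK_comp_opD (L : H →L[ℝ] H) (r s θ : ℝ) {ρ σ : ℝ} (hρ : ρ ≠ 0) (hσ : σ ≠ 0) :
    opK L r s θ ρ σ ∘L opD H ρ σ = opG L r s θ := by
  rw [opK, comp_assoc, opD_comp_opD, inv_mul_cancel₀ hρ, inv_mul_cancel₀ hσ, opD_one_one,
    comp_id]

theorem inner_sub_Fmap_sub (L : H →L[ℝ] H) (uT : H) (τ : ℝ) (w w' : W H) :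
    ⟪w - w', Fmap L uT τ w - Fmap L uT τ w'⟫_ℝ
      = τ * ‖(eW H w).1 - (eW H w').1‖ ^ 2 + ‖(eW H w).2 - (eW H w').2‖ ^ 2 := by
  rw [inner_eq_eW, map_sub, map_sub, Fmap, Fmap, ContinuousLinearEquiv.apply_symm_apply,
    ContinuousLinearEquiv.apply_symm_apply]
  generalize eW H w = x, eW H w' = y
  have hfst : τ • x.1 + adjoint L x.2 - (τ • y.1 + adjoint L y.2)
      = τ • (x.1 - y.1) + adjoint L (x.2 - y.2) := by
    rw [smul_sub, map_sub]; abel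
  have hsnd : x.2 - L x.1 + uT - (y.2 - L y.1 + uT) = (x.2 - y.2) - L (x.1 - y.1) := by
    rw [map_sub]; abel
  rw [Prod.fst_sub, Prod.snd_sub, Prod.fst_sub, Prod.snd_sub, hfst, hsnd, inner_add_right,
    inner_sub_right, real_inner_smul_right, adjoint_inner_right, real_inner_self_eq_norm_sq,
    real_inner_self_eq_norm_sq, real_inner_comm (x.2 - y.2)]
  ring

theorem PredVI.inner_sub_Fmap_le {L : H →L[ℝ] H} {uT : H} {τ : ℝ} {φ : H → ℝ} {r s θ : ℝ}
    {wk wt wstar : W H} (hVI : PredVI L uT τ φ r s θ wk wt) (hstar : IsSaddle L uT τ φ wstar) :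
    ⟪wt - wstar, Fmap L uT τ wt - Fmap L uT τ wstar⟫_ℝ
      ≤ ⟪opG L r s θ (wk - wt), wt - wstar⟫_ℝ := by
  have hpred := hVI wstar
  have hsaddle := hstar wt
  rw [← neg_sub wt wstar, inner_neg_left, inner_add_right] at hpred
  rw [← neg_sub wt wk, map_neg, inner_neg_left, inner_sub_right, real_inner_comm (wt - wstar)]
  linarith

end Operators

theorem contraction_estimate_general
    {H : Type*} [NormedAddCommGroup H] [InnerProductSpace ℝ H] [CompleteSpace H]
    (L : H →L[ℝ] H) (uT : H) (τ : ℝ)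
    (φ : H → ℝ)
    (r s θ ρ σ : ℝ)
    (hρ : 0 < ρ) (hσ : 0 < σ)
    (hK : IsSelfAdjoint (opK L r s θ ρ σ))
    (wstar : W H) (hstar : IsSaddle L uT τ φ wstar)
    (wk wt wk1 : W H)
    (hVI : PredVI L uT τ φ r s θ wk wt)
    (hcorr : wk1 = wk - opD H ρ σ (wk - wt)) :
    normSq (opK L r s θ ρ σ) (wk1 - wstar)
      ≤ normSq (opK L r s θ ρ σ) (wk - wstar)
        - normSq (opN L r s θ ρ σ) (wk - wt)
        - 2 * ‖(eW H wt).2 - (eW H wstar).2‖ ^ 2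
        - 2 * τ * ‖(eW H wt).1 - (eW H wstar).1‖ ^ 2 := by
  have hmono := hVI.inner_sub_Fmap_le hstar
  rw [inner_sub_Fmap_sub] at hmono
  have hexpand := inner_map_sub_apply_of_comp_eq (opK_comp_opD L r s θ hρ.ne' hσ.ne') hK
    (wk - wstar) (wk - wt)
  rw [sub_sub_sub_cancel_left, sub_right_comm wk wstar, ← hcorr] at hexpand
  unfold normSq opN
  linarith

/-- Contraction estimate: if `K` is self-adjoint, `w*` is a saddle point, `w̃ᵏ` satisfies the
prediction VI and `wᵏ⁺¹ = wᵏ − D(wᵏ − w̃ᵏ)`, then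
`‖wᵏ⁺¹ − w*‖²_K ≤ ‖wᵏ − w*‖²_K − ‖wᵏ − w̃ᵏ‖²_N − 2‖p̃ᵏ − p*‖² − 2τ‖ũ₀ᵏ − u₀*‖²`. -/
theorem contraction_estimate
    {H : Type*} [NormedAddCommGroup H] [InnerProductSpace ℝ H] [CompleteSpace H]
    (L : H →L[ℝ] H) (uT : H) (τ β : ℝ) (hτ : 0 < τ) (hβ : 0 ≤ β)
    (φ : H → ℝ) (hφ : ConvexOn ℝ Set.univ φ)
    (r s θ ρ σ : ℝ) (hr : 0 < r) (hs : 0 < s) (hθ : θ ∈ Set.Ioc (0 : ℝ) 1)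
    (hρ : 0 < ρ) (hσ : 0 < σ)
    (hK : IsSelfAdjoint (opK L r s θ ρ σ))
    (wstar : W H) (hstar : IsSaddle L uT τ φ wstar)
    (wk wt wk1 : W H)
    (hVI : PredVI L uT τ φ r s θ wk wt)
    (hcorr : wk1 = wk - opD H ρ σ (wk - wt)) :
    normSq (opK L r s θ ρ σ) (wk1 - wstar)
      ≤ normSq (opK L r s θ ρ σ) (wk - wstar)
        - normSq (opN L r s θ ρ σ) (wk - wt)
        - 2 * ‖(eW H wt).2 - (eW H wstar).2‖ ^ 2
        - 2 * τ * ‖(eW H wt).1 - (eW H wstar).1‖ ^ 2 :=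
  contraction_estimate_general L uT τ φ r s θ ρ σ hρ hσ hK wstar hstar wk wt wk1 hVI hcorr
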